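/- arXiv:2601.18038 — 6 statements merged into one kernel-verified Lean document; each statement's English description precedes it below -/
import Mathlib

section
/- Let F : X ⇒ Y be a set-valued mapping between Euclidean spaces whose graph is locally closed around (x̄, ȳ) ∈ gph F. If F is metrically subregular at x̄ for ȳ, then the kernel of the graphical derivative DF(x̄|ȳ) equals the tangent cone T_{F⁻¹(ȳ)}(x̄). -/
/-!
If `(w, 0)` is tangent to `gph S` at `(x̄, ȳ)`, there are `tₙ ↓ 0`, `uₙ → w`, `zₙ → 0` with
`ȳ + tₙ zₙ ∈ S (x̄ + tₙ uₙ)`. Subregularity puts a point of `S⁻¹(ȳ)` within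
`κ tₙ ‖zₙ‖ + o(tₙ)` of `x̄ + tₙ uₙ`, and a perturbation of `uₙ` by `o(1)` is still a tangent
sequence converging to `w`. The reverse inclusion holds for any mapping: pair a tangent
sequence of `S⁻¹(ȳ)` with the zero sequence in the image space.
-/

open Filter Topology Metric Set
open scoped RealInnerProductSpace NNReal ENNReal

noncomputable section

/-- Bouligand (contingent) tangent cone. -/
def tanCone {G : Type*} [AddCommGroup G] [Module ℝ G] [TopologicalSpace G]
    (s : Set G) (x : G) : Set G :=
  {w | ∃ (t : ℕ → ℝ) (wk : ℕ → G), (∀ n, 0 < t n) ∧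
    Tendsto t atTop (𝓝 0) ∧ Tendsto wk atTop (𝓝 w) ∧ ∀ n, x + t n • wk n ∈ s}

variable {E F : Type*} [NormedAddCommGroup E] [InnerProductSpace ℝ E]
  [NormedAddCommGroup F] [InnerProductSpace ℝ F]

/-- Graph of a set-valued mapping. -/
def gph (S : E → Set F) : Set (E × F) := {p | p.2 ∈ S p.1}

/-- Graphical derivative. -/
def gder (S : E → Set F) (x : E) (y : F) (w : E) : Set F :=
  {z | (w, z) ∈ tanCone (gph S) (x, y)}

/-- Local closedness of the graph around a point. -/
def LocallyClosedGraph (S : E → Set F) (x : E) (y : F) : Prop :=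
  ∃ U ∈ 𝓝 ((x, y) : E × F), IsClosed (U ∩ gph S)

/-- Metric subregularity of a set-valued mapping at `x` for `y`. -/
def MetrSubreg (S : E → Set F) (x : E) (y : F) : Prop :=
  ∃ κ : ℝ≥0, ∃ ε : ℝ, 0 < ε ∧ ∀ x' ∈ ball x ε,
    EMetric.infEdist x' {u | y ∈ S u} ≤ (κ : ℝ≥0∞) * EMetric.infEdist y (S x')

/-- Convex subdifferential of an extended-real-valued function. -/
def subdiff (φ : E → EReal) (x : E) : Set E :=
  {v | ∀ u, φ x + ((⟪v, u - x⟫ : ℝ) : EReal) ≤ φ u}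

/-- Properness. -/
def ProperFn (φ : E → EReal) : Prop := (∀ x, φ x ≠ ⊥) ∧ ∃ x, φ x ≠ ⊤

/-- Convexity via the epigraph. -/
def ConvexFn (φ : E → EReal) : Prop := Convex ℝ {p : E × ℝ | φ p.1 ≤ (p.2 : EReal)}

/-- Fenchel conjugate. -/
def conjFn (φ : E → EReal) (v : E) : EReal := ⨆ x, ((⟪v, x⟫ : ℝ) : EReal) - φ x

/-- Second subderivative. -/
def secondSubderiv (φ : E → EReal) (x v w : E) : EReal :=
  Filter.liminf (fun p : ℝ × E =>
    (((2 / p.1 ^ 2 : ℝ)) : EReal) *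
      (φ (x + p.1 • p.2) - φ x - ((p.1 * ⟪v, p.2⟫ : ℝ) : EReal)))
    ((𝓝[>] (0 : ℝ)) ×ˢ 𝓝 w)

/-- Quadratic growth condition at `x` for `v`. -/
def QuadGrowth (φ : E → EReal) (x v : E) : Prop :=
  ∃ c : ℝ, 0 < c ∧ ∃ ε : ℝ, 0 < ε ∧ ∀ u ∈ ball x ε,
    φ x + ((⟪v, u - x⟫ + c / 2 * (infDist u {u' | v ∈ subdiff φ u'}) ^ 2 : ℝ) : EReal) ≤ φ u

section TangentCone

variable {G : Type*} [NormedAddCommGroup G] [NormedSpace ℝ G] {s : Set G} {x w : G}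

theorem mem_tanCone_of_eventually_mem {t : ℕ → ℝ} {wk : ℕ → G} (ht : ∀ n, 0 < t n)
    (ht0 : Tendsto t atTop (𝓝 0)) (hwk : Tendsto wk atTop (𝓝 w))
    (hmem : ∀ᶠ n in atTop, x + t n • wk n ∈ s) : w ∈ tanCone s x := by
  obtain ⟨N, hN⟩ := eventually_atTop.1 hmem
  exact ⟨fun n => t (n + N), fun n => wk (n + N), fun n => ht _,
    (tendsto_add_atTop_iff_nat N).2 ht0, (tendsto_add_atTop_iff_nat N).2 hwk,
    fun n => hN _ (Nat.le_add_left N n)⟩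

theorem mem_tanCone_of_eventually_dist_le {t r : ℕ → ℝ} {u : ℕ → G} (ht : ∀ n, 0 < t n)
    (ht0 : Tendsto t atTop (𝓝 0)) (hu : Tendsto u atTop (𝓝 w)) (hr : Tendsto r atTop (𝓝 0))
    (hp : ∀ᶠ n in atTop, ∃ p ∈ s, dist p (x + t n • u n) ≤ t n * r n) : w ∈ tanCone s x := by
  obtain ⟨p, hp⟩ := hp.choice
  set wk : ℕ → G := fun n => (t n)⁻¹ • (p n - x)
  have hxwk : ∀ n, x + t n • wk n = p n := fun n => by
    simp only [wk, smul_inv_smul₀ (ht n).ne', add_sub_cancel]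
  have hclose : ∀ᶠ n in atTop, ‖wk n - u n‖ ≤ r n := by
    filter_upwards [hp] with n hn
    have hwk_sub : wk n - u n = (t n)⁻¹ • (p n - (x + t n • u n)) := by
      simp only [wk, smul_sub, smul_add, inv_smul_smul₀ (ht n).ne']
      abel
    rw [hwk_sub, norm_smul, norm_inv, Real.norm_eq_abs, abs_of_pos (ht n), ← dist_eq_norm,
      inv_mul_le_iff₀ (ht n)]
    exact hn.2
  have hwk : Tendsto wk atTop (𝓝 w) := by
    have hdiff : Tendsto (fun n => wk n - u n) atTop (𝓝 0) :=
      squeeze_zero_norm' hclose hr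
    simpa using hdiff.add hu
  exact mem_tanCone_of_eventually_mem ht ht0 hwk (hp.mono fun n hn => hxwk n ▸ hn.1)

end TangentCone

section MetricSubregularity

variable {X Y : Type*} [NormedAddCommGroup X] [NormedAddCommGroup Y]
  {S : X → Set Y} {x : X} {y : Y}

theorem MetrSubreg.exists_dist_lt (hms : MetrSubreg S x y) :
    ∃ κ : ℝ, 0 ≤ κ ∧ ∃ ε > 0, ∀ x' ∈ ball x ε, ∀ y' ∈ S x', ∀ δ > 0,
      ∃ p, y ∈ S p ∧ dist x' p < κ * dist y y' + δ := by
  obtain ⟨κ, ε, hε, hsub⟩ := hms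
  refine ⟨κ, κ.coe_nonneg, ε, hε, fun x' hx' y' hy' δ hδ => ?_⟩
  have hlt : infEDist x' {u | y ∈ S u} < ENNReal.ofReal (κ * dist y y' + δ) :=
    calc infEDist x' {u | y ∈ S u}
        ≤ κ * infEDist y (S x') := hsub x' hx'
      _ ≤ κ * edist y y' := by gcongr; exact infEDist_le_edist_of_mem hy'
      _ = ENNReal.ofReal (κ * dist y y') := by
          rw [ENNReal.ofReal_mul κ.coe_nonneg, ENNReal.ofReal_coe_nnreal, edist_dist]
      _ < ENNReal.ofReal (κ * dist y y' + δ) := by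
          rw [ENNReal.ofReal_lt_ofReal_iff (by positivity)]
          linarith
  obtain ⟨p, hp, hpx⟩ := infEDist_lt_iff.1 hlt
  exact ⟨p, hp, edist_lt_ofReal.1 hpx⟩

end MetricSubregularity

section GraphicalDerivative

variable {S : E → Set F} {x : E} {y : F}

theorem mem_tanCone_preimage_of_zero_mem_gder (hms : MetrSubreg S x y) {w : E}
    (hw : (0 : F) ∈ gder S x y w) : w ∈ tanCone {u | y ∈ S u} x := by
  obtain ⟨t, wz, ht, ht0, hwz, hmem⟩ := hw
  obtain ⟨κ, -, ε, hε, hsub⟩ := hms.exists_dist_lt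
  have hgraph : ∀ n, y + t n • (wz n).2 ∈ S (x + t n • (wz n).1) := fun n => by
    simpa [gph] using hmem n
  have hu : Tendsto (fun n => (wz n).1) atTop (𝓝 w) := (continuous_fst.tendsto _).comp hwz
  have hz : Tendsto (fun n => (wz n).2) atTop (𝓝 0) := (continuous_snd.tendsto _).comp hwz
  have hx_near : ∀ᶠ n in atTop, x + t n • (wz n).1 ∈ ball x ε := by
    have hlim : Tendsto (fun n => x + t n • (wz n).1) atTop (𝓝 (x + (0 : ℝ) • w)) :=
      tendsto_const_nhds.add (ht0.smul hu)
    rw [zero_smul, add_zero] at hlim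
    exact hlim.eventually (ball_mem_nhds x hε)
  -- the slack `tₙ / (n + 1)` makes up for the infimum distance not being attained
  refine mem_tanCone_of_eventually_dist_le (r := fun n => κ * ‖(wz n).2‖ + 1 / ((n : ℝ) + 1))
    ht ht0 hu ?_ ?_
  · simpa using (tendsto_norm_zero.comp hz).const_mul κ |>.add
      tendsto_one_div_add_atTop_nhds_zero_nat
  filter_upwards [hx_near] with n hn
  obtain ⟨p, hp, hdist⟩ :=
    hsub _ hn _ (hgraph n) (t n * (1 / ((n : ℝ) + 1))) (mul_pos (ht n) Nat.one_div_pos_of_nat)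
  refine ⟨p, hp, ?_⟩
  rw [dist_comm, dist_self_add_right, norm_smul, Real.norm_eq_abs, abs_of_pos (ht n)] at hdist
  linarith

theorem zero_mem_gder_of_mem_tanCone {w : E} (hw : w ∈ tanCone {u | y ∈ S u} x) :
    (0 : F) ∈ gder S x y w := by
  obtain ⟨t, wk, ht, ht0, hwk, hmem⟩ := hw
  refine ⟨t, fun n => (wk n, 0), ht, ht0, hwk.prodMk_nhds tendsto_const_nhds, fun n => ?_⟩
  simpa [gph] using hmem n

end GraphicalDerivative

theorem stmt1_general {E F : Type*} [NormedAddCommGroup E] [InnerProductSpace ℝ E]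
    [NormedAddCommGroup F] [InnerProductSpace ℝ F]
    (S : E → Set F) (xb : E) (yb : F)
    (hms : MetrSubreg S xb yb) :
    {w | (0 : F) ∈ gder S xb yb w} = tanCone {x | yb ∈ S x} xb :=
  Set.ext fun _ => ⟨mem_tanCone_preimage_of_zero_mem_gder hms, zero_mem_gder_of_mem_tanCone⟩

/-- under metric subregularity, the kernel of the graphical derivative
equals the tangent cone to `F⁻¹(yb)` at `xb`. -/
theorem stmt1 {E F : Type*} [NormedAddCommGroup E] [InnerProductSpace ℝ E]
    [NormedAddCommGroup F] [InnerProductSpace ℝ F]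
    [FiniteDimensional ℝ E] [FiniteDimensional ℝ F]
    (S : E → Set F) (xb : E) (yb : F) (hxy : yb ∈ S xb)
    (hcl : LocallyClosedGraph S xb yb) (hms : MetrSubreg S xb yb) :
    {w | (0 : F) ∈ gder S xb yb w} = tanCone {x | yb ∈ S x} xb :=
  stmt1_general S xb yb hms

end
end

section
/- Let φ : X → ℝ ∪ {∞} be a proper convex function on a Euclidean space and (x̄, v̄) ∈ gph ∂φ. For any z ∈ D∂φ(x̄|v̄)(w), one has 2⟨z, w⟩ ≥ d²φ(x̄|v̄)(w) + d²φ*(v̄|x̄)(z), where d²φ denotes the second subderivative and φ* the Fenchel conjugate. -/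
open Filter Topology Metric Set
open scoped RealInnerProductSpace NNReal ENNReal

noncomputable section

variable {E F : Type*} [NormedAddCommGroup E] [InnerProductSpace ℝ E]
  [NormedAddCommGroup F] [InnerProductSpace ℝ F]

/-!
Take a tangent sequence `t_n ↓ 0`, `(w_n, z_n) → (w, z)` with `v̄ + t_n z_n ∈ ∂φ(x̄ + t_n w_n)`.
Fenchel–Young holds with equality at `(x̄, v̄)` and at `(x̄ + t_n w_n, v̄ + t_n z_n)`, so the
second-order difference quotients of `φ` at `(t_n, w_n)` and of `φ*` at `(t_n, z_n)` add up exactly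
to `2⟨z_n, w_n⟩`. Each second subderivative is at most the lower limit of its quotients, and a sum
of lower limits is at most the lower limit of the sum, which is `2⟨z, w⟩`.
-/

lemma ProperFn.eq_coe_toReal_of_mem_subdiff {φ : E → EReal} (hp : ProperFn φ) {x v : E}
    (h : v ∈ subdiff φ x) : φ x = ((φ x).toReal : EReal) := by
  refine (EReal.coe_toReal (fun htop => ?_) (hp.1 x)).symm
  obtain ⟨u, hu⟩ := hp.2
  have hle := h u
  rw [htop, EReal.top_add_coe] at hle
  exact hu (top_le_iff.mp hle)

lemma ProperFn.conjFn_eq_of_mem_subdiff {φ : E → EReal} (hp : ProperFn φ) {x v : E}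
    (h : v ∈ subdiff φ x) : conjFn φ v = ((⟪v, x⟫ - (φ x).toReal : ℝ) : EReal) := by
  have hx := hp.eq_coe_toReal_of_mem_subdiff h
  refine le_antisymm (iSup_le fun u => ?_) ?_
  · have hu := h u
    rw [hx] at hu
    calc ((⟪v, u⟫ : ℝ) : EReal) - φ u
        ≤ ((⟪v, u⟫ : ℝ) : EReal) - (((φ x).toReal : EReal) + ((⟪v, u - x⟫ : ℝ) : EReal)) :=
          EReal.sub_le_sub le_rfl hu
      _ = ((⟪v, x⟫ - (φ x).toReal : ℝ) : EReal) := by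
          norm_cast
          rw [inner_sub_right]
          ring
  · refine le_trans (le_of_eq ?_) (le_iSup (fun u => ((⟪v, u⟫ : ℝ) : EReal) - φ u) x)
    rw [hx]
    norm_cast

/-- The second-order difference quotient `Δ²_t ψ(x|v)(w)` whose lower limit is `d²ψ(x|v)(w)`. -/
def secondDiffQuot (ψ : E → EReal) (x v : E) (p : ℝ × E) : EReal :=
  ((2 / p.1 ^ 2 : ℝ) : EReal) * (ψ (x + p.1 • p.2) - ψ x - ((p.1 * ⟪v, p.2⟫ : ℝ) : EReal))

lemma secondSubderiv_le_liminf_secondDiffQuot (ψ : E → EReal) (x v w : E) {ι : Type*}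
    {l : Filter ι} {m : ι → ℝ × E} (hm : Tendsto m l (𝓝[>] (0 : ℝ) ×ˢ 𝓝 w)) :
    secondSubderiv ψ x v w ≤ liminf (secondDiffQuot ψ x v ∘ m) l :=
  hm.liminf_le_liminf_comp

lemma secondDiffQuot_add_secondDiffQuot_conjFn {φ : E → EReal} (hp : ProperFn φ) {x v w z : E}
    {t : ℝ} (ht : t ≠ 0) (h : v ∈ subdiff φ x) (h' : v + t • z ∈ subdiff φ (x + t • w)) :
    secondDiffQuot φ x v (t, w) + secondDiffQuot (conjFn φ) v x (t, z)
      = ((2 * ⟪z, w⟫ : ℝ) : EReal) := by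
  simp only [secondDiffQuot]
  rw [hp.eq_coe_toReal_of_mem_subdiff h, hp.eq_coe_toReal_of_mem_subdiff h',
    hp.conjFn_eq_of_mem_subdiff h, hp.conjFn_eq_of_mem_subdiff h']
  norm_cast
  simp only [inner_add_left, inner_add_right, real_inner_smul_left, real_inner_smul_right,
    real_inner_comm x z]
  field_simp
  ring

theorem stmt3_general {E : Type*} [NormedAddCommGroup E] [InnerProductSpace ℝ E]
    (φ : E → EReal) (hproper : ProperFn φ)
    (xb vb : E) (hsub : vb ∈ subdiff φ xb) (w z : E)
    (hz : z ∈ gder (subdiff φ) xb vb w) :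
    secondSubderiv φ xb vb w + secondSubderiv (conjFn φ) vb xb z
      ≤ ((2 * ⟪z, w⟫ : ℝ) : EReal) := by
  obtain ⟨t, wz, ht, ht0, hwz, hgph⟩ := hz
  have htp : Tendsto t atTop (𝓝[>] 0) :=
    tendsto_nhdsWithin_iff.mpr ⟨ht0, Eventually.of_forall ht⟩
  have hwn : Tendsto (fun n => (wz n).1) atTop (𝓝 w) := (continuous_fst.tendsto _).comp hwz
  have hzn : Tendsto (fun n => (wz n).2) atTop (𝓝 z) := (continuous_snd.tendsto _).comp hwz
  have hsum : ∀ n, secondDiffQuot φ xb vb (t n, (wz n).1)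
      + secondDiffQuot (conjFn φ) vb xb (t n, (wz n).2)
      = ((2 * ⟪(wz n).2, (wz n).1⟫ : ℝ) : EReal) :=
    fun n => secondDiffQuot_add_secondDiffQuot_conjFn hproper (ht n).ne' hsub (hgph n)
  have hlim : Tendsto (fun n => ((2 * ⟪(wz n).2, (wz n).1⟫ : ℝ) : EReal)) atTop
      (𝓝 ((2 * ⟪z, w⟫ : ℝ) : EReal)) :=
    EReal.tendsto_coe.mpr ((hzn.inner hwn).const_mul 2)
  calc secondSubderiv φ xb vb w + secondSubderiv (conjFn φ) vb xb z
      ≤ liminf (fun n => secondDiffQuot φ xb vb (t n, (wz n).1)) atTop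
        + liminf (fun n => secondDiffQuot (conjFn φ) vb xb (t n, (wz n).2)) atTop :=
        add_le_add (secondSubderiv_le_liminf_secondDiffQuot _ _ _ _ (htp.prodMk hwn))
          (secondSubderiv_le_liminf_secondDiffQuot _ _ _ _ (htp.prodMk hzn))
    _ ≤ liminf (fun n => ((2 * ⟪(wz n).2, (wz n).1⟫ : ℝ) : EReal)) atTop := by
        rw [← funext hsum]
        exact EReal.le_liminf_add
    _ = ((2 * ⟪z, w⟫ : ℝ) : EReal) := hlim.liminf_eq

/-- `2⟨z,w⟩ ≥ d²φ(xb|vb)(w) + d²φ*(vb|xb)(z)` for `z ∈ D∂φ(xb|vb)(w)`. -/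
theorem stmt3 {E : Type*} [NormedAddCommGroup E] [InnerProductSpace ℝ E]
    [FiniteDimensional ℝ E]
    (φ : E → EReal) (hproper : ProperFn φ) (hconv : ConvexFn φ)
    (xb vb : E) (hsub : vb ∈ subdiff φ xb) (w z : E)
    (hz : z ∈ gder (subdiff φ) xb vb w) :
    secondSubderiv φ xb vb w + secondSubderiv (conjFn φ) vb xb z
      ≤ ((2 * ⟪z, w⟫ : ℝ) : EReal) :=
  stmt3_general φ hproper xb vb hsub w z hz

end
end

section
/- Let K : X → Y be a linear map between Euclidean spaces and C ⊆ Y a closed convex set with C ∩ Im K ≠ ∅. For any x₀ ∈ K⁻¹(C), the tangent cone satisfies T_{K⁻¹(C)}(x₀) = K⁻¹(T_{C ∩ Im K}(K x₀)). -/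
open Filter Topology Metric Set
open scoped RealInnerProductSpace NNReal ENNReal

noncomputable section

variable {E F : Type*} [NormedAddCommGroup E] [InnerProductSpace ℝ E]
  [NormedAddCommGroup F] [InnerProductSpace ℝ F]

/-!
For convex `Ω = K⁻¹(C)` the tangent cone `T_Ω(x₀)` is the closure of the radial cone
`ℝ₊(Ω - x₀)`, so it is closed, and it is invariant under translation by `Ker K` because `Ω` is.
In finite dimensions such a set has closed image under `K`: on a complement of `Ker K` the map `K`
is a closed embedding. Since `K(ℝ₊(Ω - x₀)) = ℝ₊(C ∩ Im K - K x₀)`, the closed set `K(T_Ω(x₀))`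
contains `T_{C ∩ Im K}(K x₀)`, and `Ker K`-invariance pulls this back to `T_Ω(x₀)`.
-/

def radialCone {G : Type*} [AddCommGroup G] [Module ℝ G] (s : Set G) (x : G) : Set G :=
  {v | ∃ l : ℝ, 0 ≤ l ∧ ∃ ω ∈ s, v = l • (ω - x)}

section TangentCone

variable {G H : Type*} [AddCommGroup G] [Module ℝ G] [AddCommGroup H] [Module ℝ H]

theorem LinearMap.image_radialCone (K : G →ₗ[ℝ] H) (s : Set G) (x : G) :
    K '' radialCone s x = radialCone (K '' s) (K x) := by
  ext v
  constructor
  · rintro ⟨_, ⟨l, hl, ω, hω, rfl⟩, rfl⟩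
    exact ⟨l, hl, K ω, mem_image_of_mem K hω, by rw [map_smul, map_sub]⟩
  · rintro ⟨l, hl, _, ⟨ω, hω, rfl⟩, rfl⟩
    exact ⟨l • (ω - x), ⟨l, hl, ω, hω, rfl⟩, by rw [map_smul, map_sub]⟩

variable [TopologicalSpace G]

theorem tanCone_subset_closure_radialCone (s : Set G) (x : G) :
    tanCone s x ⊆ closure (radialCone s x) := by
  rintro w ⟨t, wk, ht, -, hwk, hmem⟩
  refine mem_closure_of_tendsto hwk (Eventually.of_forall fun n => ?_)
  refine ⟨(t n)⁻¹, inv_nonneg.2 (ht n).le, x + t n • wk n, hmem n, ?_⟩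
  rw [add_sub_cancel_left, smul_smul, inv_mul_cancel₀ (ht n).ne', one_smul]

theorem Convex.closure_radialCone_subset_tanCone [FrechetUrysohnSpace G] {s : Set G} {x : G}
    (hs : Convex ℝ s) (hx : x ∈ s) : closure (radialCone s x) ⊆ tanCone s x := by
  intro w hw
  obtain ⟨u, hu, hlim⟩ := mem_closure_iff_seq_limit.1 hw
  choose l hl ω hω hu using hu
  -- the step `t n = (n + 1 + l n)⁻¹` tends to zero and `t n * l n ≤ 1`, so `x + t n • u n ∈ [x, ω n]`
  have hpos : ∀ n : ℕ, 0 < (n : ℝ) + (1 + l n) := fun n => by have := hl n; positivity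
  have hstep : Tendsto (fun n : ℕ => ((n : ℝ) + (1 + l n))⁻¹) atTop (𝓝 0) :=
    (tendsto_atTop_add_right_of_le _ 0 tendsto_natCast_atTop_atTop
      fun n => by linarith [hl n]).inv_tendsto_atTop
  refine ⟨_, u, fun n => inv_pos.2 (hpos n), hstep, hlim, fun n => ?_⟩
  rw [hu n, smul_smul]
  refine hs.add_smul_sub_mem hx (hω n) ⟨mul_nonneg (inv_pos.2 (hpos n)).le (hl n), ?_⟩
  exact inv_mul_le_one_of_le₀ (by linarith [Nat.cast_nonneg (α := ℝ) n]) (hpos n).le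

theorem Convex.tanCone_eq_closure_radialCone [FrechetUrysohnSpace G] {s : Set G} {x : G}
    (hs : Convex ℝ s) (hx : x ∈ s) : tanCone s x = closure (radialCone s x) :=
  (tanCone_subset_closure_radialCone s x).antisymm (hs.closure_radialCone_subset_tanCone hx)

theorem LinearMap.add_mem_tanCone_preimage [ContinuousAdd G] (K : G →ₗ[ℝ] H) {C : Set H}
    {x w n : G} (hw : w ∈ tanCone (K ⁻¹' C) x) (hn : K n = 0) : w + n ∈ tanCone (K ⁻¹' C) x := by
  obtain ⟨t, wk, ht, ht0, hwk, hmem⟩ := hw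
  refine ⟨t, fun k => wk k + n, ht, ht0, hwk.add_const n, fun k => ?_⟩
  simpa only [mem_preimage, map_add, map_smul, hn, smul_zero, add_zero] using hmem k

variable [TopologicalSpace H]

theorem LinearMap.mem_tanCone_image (K : G →ₗ[ℝ] H) (hK : Continuous K) {s : Set G} {x w : G}
    (hw : w ∈ tanCone s x) : K w ∈ tanCone (K '' s) (K x) := by
  obtain ⟨t, wk, ht, ht0, hwk, hmem⟩ := hw
  exact ⟨t, K ∘ wk, ht, ht0, (hK.tendsto w).comp hwk,
    fun n => ⟨_, hmem n, by rw [map_add, map_smul, Function.comp_apply]⟩⟩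

end TangentCone

theorem LinearMap.isClosed_image_of_add_mem_ker {𝕜 V W : Type*} [NontriviallyNormedField 𝕜]
    [CompleteSpace 𝕜] [AddCommGroup V] [TopologicalSpace V] [IsTopologicalAddGroup V]
    [Module 𝕜 V] [ContinuousSMul 𝕜 V] [T2Space V] [FiniteDimensional 𝕜 V]
    [AddCommGroup W] [TopologicalSpace W] [IsTopologicalAddGroup W] [Module 𝕜 W]
    [ContinuousSMul 𝕜 W] [T2Space W]
    (K : V →ₗ[𝕜] W) {T : Set V} (hT : IsClosed T) (hker : ∀ v ∈ T, ∀ n ∈ ker K, v + n ∈ T) :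
    IsClosed (K '' T) := by
  obtain ⟨S, hS⟩ := (ker K).exists_isCompl
  have hinj : ker (K.domRestrict S) = ⊥ :=
    ker_eq_bot.2 (injective_domRestrict_iff.2 hS.disjoint.symm)
  have himage : K '' T = K.domRestrict S '' (Subtype.val ⁻¹' T) := by
    ext y
    constructor
    · rintro ⟨u, hu, rfl⟩
      obtain ⟨n, hn, v, hv, rfl⟩ := Submodule.mem_sup.1 (hS.sup_eq_top ▸ Submodule.mem_top (x := u))
      refine ⟨⟨v, hv⟩, ?_, by simp [mem_ker.1 hn]⟩
      simpa using hker _ hu (-n) (neg_mem hn)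
    · rintro ⟨v, hv, rfl⟩
      exact ⟨v, hv, rfl⟩
  rw [himage]
  exact (isClosedEmbedding_of_injective hinj).isClosedMap _ (hT.preimage continuous_subtype_val)

theorem stmt11_general {E F : Type*} [NormedAddCommGroup E] [InnerProductSpace ℝ E]
    [NormedAddCommGroup F] [InnerProductSpace ℝ F]
    [FiniteDimensional ℝ E]
    (K : E →ₗ[ℝ] F) (C : Set F) (hCconv : Convex ℝ C)
    (x₀ : E) (hx₀ : K x₀ ∈ C) :
    tanCone ((⇑K) ⁻¹' C) x₀ = (⇑K) ⁻¹' (tanCone (C ∩ Set.range K) (K x₀)) := by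
  set Ω := (⇑K) ⁻¹' C
  have hΩ : Convex ℝ Ω := hCconv.linear_preimage K
  have hΩ_tan := hΩ.tanCone_eq_closure_radialCone (x := x₀) hx₀
  rw [← image_preimage_eq_inter_range]
  ext w
  refine ⟨K.mem_tanCone_image K.continuous_of_finiteDimensional, fun hw => ?_⟩
  have hclosed : IsClosed (K '' tanCone Ω x₀) :=
    K.isClosed_image_of_add_mem_ker (hΩ_tan ▸ isClosed_closure)
      fun v hv n hn => K.add_mem_tanCone_preimage hv hn
  obtain ⟨u, hu, hKu⟩ : K w ∈ K '' tanCone Ω x₀ := by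
    refine hclosed.closure_subset (closure_mono ?_ (tanCone_subset_closure_radialCone _ _ hw))
    rw [← K.image_radialCone, hΩ_tan]
    exact image_mono subset_closure
  simpa using K.add_mem_tanCone_preimage hu (n := w - u) (by rw [map_sub, hKu, sub_self])

/-- tangent cone to the linear inverse image of a closed convex set. -/
theorem stmt11 {E F : Type*} [NormedAddCommGroup E] [InnerProductSpace ℝ E]
    [NormedAddCommGroup F] [InnerProductSpace ℝ F]
    [FiniteDimensional ℝ E] [FiniteDimensional ℝ F]
    (K : E →ₗ[ℝ] F) (C : Set F) (hC : IsClosed C) (hCconv : Convex ℝ C)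
    (hne : (C ∩ Set.range K).Nonempty) (x₀ : E) (hx₀ : K x₀ ∈ C) :
    tanCone ((⇑K) ⁻¹' C) x₀ = (⇑K) ⁻¹' (tanCone (C ∩ Set.range K) (K x₀)) :=
  stmt11_general K C hCconv x₀ hx₀

end
end

section
/- Let K : X → Y be a linear map between Euclidean spaces. If D ⊆ X is a closed convex cone with Ker K ⊆ D (so Ker K + D = D), then K(D) is a closed convex cone in Y. -/
open Filter Topology Metric Set
open scoped RealInnerProductSpace NNReal ENNReal

noncomputable section

variable {E F : Type*} [NormedAddCommGroup E] [InnerProductSpace ℝ E]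
  [NormedAddCommGroup F] [InnerProductSpace ℝ F]

/-- the image under a linear map of a closed convex cone containing the
kernel is a closed convex cone. -/
theorem stmt12 {E F : Type*} [NormedAddCommGroup E] [InnerProductSpace ℝ E]
    [NormedAddCommGroup F] [InnerProductSpace ℝ F]
    [FiniteDimensional ℝ E] [FiniteDimensional ℝ F]
    (K : E →ₗ[ℝ] F) (D : Set E) (hD : IsClosed D) (hconv : Convex ℝ D)
    (hcone : ∀ c : ℝ, 0 ≤ c → ∀ x ∈ D, c • x ∈ D)
    (hker : ∀ x : E, K x = 0 → x ∈ D) :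
    IsClosed ((⇑K) '' D) ∧ Convex ℝ ((⇑K) '' D) ∧
      ∀ c : ℝ, 0 ≤ c → ∀ y ∈ (⇑K) '' D, c • y ∈ (⇑K) '' D := by
  have hadd : ∀ x ∈ D, ∀ k : E, K k = 0 → x + k ∈ D := by
    intro x hx k hk
    have hk' : k ∈ D := hker k hk
    have h2 : (1/2 : ℝ) • x + (1/2 : ℝ) • k ∈ D :=
      hconv hx hk' (by norm_num) (by norm_num) (by norm_num)
    have := hcone 2 (by norm_num) _ h2
    rw [smul_add, smul_smul, smul_smul] at this
    norm_num at this
    exact this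
  set S : Submodule ℝ E := (LinearMap.ker K)ᗮ with hS
  have himg : K '' D = K '' (D ∩ ↑S) := by
    refine subset_antisymm ?_ (image_mono inter_subset_left)
    rintro _ ⟨x, hx, rfl⟩
    obtain ⟨y, hy, z, hz, rfl⟩ := (LinearMap.ker K).exists_add_mem_mem_orthogonal x
    refine ⟨z, ⟨?_, hz⟩, ?_⟩
    · have := hadd _ hx (-y) (by simpa using (LinearMap.mem_ker.1 (neg_mem hy)))
      simpa using this
    · simp [map_add, LinearMap.mem_ker.1 hy]
  have hclosed : IsClosed (K '' D) := by
    rw [himg]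
    set f : S →ₗ[ℝ] F := K.comp S.subtype with hf
    have hinj : Function.Injective f := by
      rw [← LinearMap.ker_eq_bot]
      ext s
      simp only [LinearMap.mem_ker, Submodule.mem_bot, hf, LinearMap.comp_apply,
        Submodule.subtype_apply]
      constructor
      · intro h
        have hs : (s : E) ∈ LinearMap.ker K := LinearMap.mem_ker.2 h
        have := (Submodule.mem_orthogonal _ _).1 s.2 _ hs
        have : (s : E) = 0 := by
          have := inner_self_eq_zero.1 this
          exact this
        exact Subtype.ext this
      · rintro rfl; simp
    have hce := f.isClosedEmbedding_of_injective (LinearMap.ker_eq_bot.2 hinj)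
    have : K '' (D ∩ ↑S) = f '' (Subtype.val ⁻¹' D) := by
      ext y
      constructor
      · rintro ⟨x, ⟨hxD, hxS⟩, rfl⟩
        exact ⟨⟨x, hxS⟩, hxD, rfl⟩
      · rintro ⟨s, hs, rfl⟩
        exact ⟨s, ⟨hs, s.2⟩, rfl⟩
    rw [this]
    exact hce.isClosedMap _ (hD.preimage continuous_subtype_val)
  refine ⟨hclosed, hconv.linear_image K, ?_⟩
  rintro c hc _ ⟨x, hx, rfl⟩
  exact ⟨c • x, hcone c hc x hx, by simp⟩


end
end

section
/- Let g : Y → ℝ ∪ {∞} be proper l.s.c. convex, K : X → Y linear, x̄ with ȳ ∈ ∂g(Kx̄). If z ∈ T_{∂g*(ȳ)}(Kx̄), then z lies in the normal cone N_{∂g(Kx̄)}(ȳ), i.e., ⟨z, y − ȳ⟩ ≤ 0 for all y ∈ ∂g(Kx̄). Equivalently, T_{∂g*(ȳ)}(Kx̄) ⊆ N_{∂g(Kx̄)}(ȳ). -/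
open Filter Topology Metric Set
open scoped RealInnerProductSpace NNReal ENNReal

noncomputable section

variable {E F : Type*} [NormedAddCommGroup E] [InnerProductSpace ℝ E]
  [NormedAddCommGroup F] [InnerProductSpace ℝ F]

/-! For `y ∈ ∂g(Kx̄)`, Fenchel–Young gives `g*(ȳ) ≥ ⟪ȳ, Kx̄⟫ - g(Kx̄)` and the subgradient
inequality of `g` at `Kx̄` gives `g*(y) ≤ ⟪y, Kx̄⟫ - g(Kx̄)`. Comparing the two through the
subgradient inequality of `g*` at `ȳ` shows that every `u ∈ ∂g*(ȳ)` satisfies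
`⟪u - Kx̄, y - ȳ⟫ ≤ 0`: the set `∂g*(ȳ)` lies in a half-space whose boundary passes through `Kx̄`,
so its tangent cone at `Kx̄` lies in the parallel half-space through `0`. -/

theorem tanCone_subset_of_subset_halfspace {s : Set E} {x a : E}
    (hs : s ⊆ {u | ⟪u - x, a⟫ ≤ 0}) : tanCone s x ⊆ {z | ⟪z, a⟫ ≤ 0} := by
  rintro z ⟨t, w, ht, -, hw, hmem⟩
  have hstep : ∀ n, ⟪w n, a⟫ ≤ 0 := fun n => by
    have h : ⟪x + t n • w n - x, a⟫ ≤ 0 := hs (hmem n)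
    rw [add_sub_cancel_left, real_inner_smul_left] at h
    exact nonpos_of_mul_nonpos_right h (ht n)
  exact le_of_tendsto (hw.inner tendsto_const_nhds) (Eventually.of_forall hstep)

theorem inner_sub_le_conjFn (φ : E → EReal) (v x : E) :
    ((⟪v, x⟫ : ℝ) : EReal) - φ x ≤ conjFn φ v :=
  le_iSup (fun x => ((⟪v, x⟫ : ℝ) : EReal) - φ x) x

theorem conjFn_le_of_mem_subdiff {φ : E → EReal} {x v : E} {r : ℝ} (hx : φ x = r)
    (hv : v ∈ subdiff φ x) : conjFn φ v ≤ ((⟪v, x⟫ - r : ℝ) : EReal) := by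
  refine iSup_le fun u => ?_
  have hu : ((r + ⟪v, u - x⟫ : ℝ) : EReal) ≤ φ u := by
    rw [EReal.coe_add, ← hx]
    exact hv u
  calc ((⟪v, u⟫ : ℝ) : EReal) - φ u
      ≤ ((⟪v, u⟫ : ℝ) : EReal) - ((r + ⟪v, u - x⟫ : ℝ) : EReal) := EReal.sub_le_sub le_rfl hu
    _ = ((⟪v, x⟫ - r : ℝ) : EReal) := by
      rw [← EReal.coe_sub, inner_sub_right]
      ring_nf

theorem ne_top_of_mem_subdiff {φ : E → EReal} (hφ : ∃ u, φ u ≠ ⊤) {x v : E}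
    (hv : v ∈ subdiff φ x) : φ x ≠ ⊤ := by
  obtain ⟨u, hu⟩ := hφ
  intro hx
  have h := hv u
  rw [hx, EReal.top_add_of_ne_bot (EReal.coe_ne_bot _)] at h
  exact hu (top_le_iff.mp h)

theorem subdiff_conjFn_subset_halfspace {φ : E → EReal} {x v : E} {r : ℝ} (hx : φ x = r)
    (hv : v ∈ subdiff φ x) (w : E) : subdiff (conjFn φ) w ⊆ {u | ⟪u - x, v - w⟫ ≤ 0} := by
  intro u hu
  have hchain : ((⟪w, x⟫ - r + ⟪u, v - w⟫ : ℝ) : EReal) ≤ ((⟪v, x⟫ - r : ℝ) : EReal) := by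
    calc ((⟪w, x⟫ - r + ⟪u, v - w⟫ : ℝ) : EReal)
        = ((⟪w, x⟫ : ℝ) : EReal) - φ x + ((⟪u, v - w⟫ : ℝ) : EReal) := by
          rw [hx, EReal.coe_add, EReal.coe_sub]
      _ ≤ conjFn φ w + ((⟪u, v - w⟫ : ℝ) : EReal) := add_le_add_left (inner_sub_le_conjFn φ w x) _
      _ ≤ conjFn φ v := hu v
      _ ≤ ((⟪v, x⟫ - r : ℝ) : EReal) := conjFn_le_of_mem_subdiff hx hv
  rw [EReal.coe_le_coe_iff] at hchain
  change ⟪u - x, v - w⟫ ≤ 0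
  rw [inner_sub_left, inner_sub_right x, real_inner_comm v x, real_inner_comm w x]
  linarith

theorem stmt16_general {E F : Type*} [NormedAddCommGroup E] [InnerProductSpace ℝ E]
    [NormedAddCommGroup F] [InnerProductSpace ℝ F]
    (g : F → EReal) (hproper : ProperFn g) (K : E →ₗ[ℝ] F) (xb : E) (yb : F) (z : F)
    (hz : z ∈ tanCone (subdiff (conjFn g) yb) (K xb)) :
    ∀ y ∈ subdiff g (K xb), ⟪z, y - yb⟫ ≤ 0 := by
  intro y hy
  obtain ⟨r, hr⟩ : ∃ r : ℝ, g (K xb) = r :=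
    ⟨_, (EReal.coe_toReal (ne_top_of_mem_subdiff hproper.2 hy) (hproper.1 _)).symm⟩
  exact tanCone_subset_of_subset_halfspace (subdiff_conjFn_subset_halfspace hr hy yb) hz

/-- `T_{∂g*(yb)}(Kxb) ⊆ N_{∂g(Kxb)}(yb)`. -/
theorem stmt16 {E F : Type*} [NormedAddCommGroup E] [InnerProductSpace ℝ E]
    [NormedAddCommGroup F] [InnerProductSpace ℝ F]
    [FiniteDimensional ℝ E] [FiniteDimensional ℝ F]
    (g : F → EReal) (hproper : ProperFn g) (hlsc : LowerSemicontinuous g)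
    (hconv : ConvexFn g) (K : E →ₗ[ℝ] F) (xb : E) (yb : F)
    (hyb : yb ∈ subdiff g (K xb)) (z : F)
    (hz : z ∈ tanCone (subdiff (conjFn g) yb) (K xb)) :
    ∀ y ∈ subdiff g (K xb), ⟪z, y - yb⟫ ≤ 0 :=
  stmt16_general g hproper K xb yb z hz

end
end

section
/- Let g : ℝⁿ → ℝ be the group Lasso norm ‖x‖_{1,2} = Σ_{J∈𝒥} ‖x_J‖ for a partition 𝒥 of {1,…,n}, let x̄ ∈ ℝⁿ and v̄ ∈ ∂‖·‖_{1,2}(x̄). Then the conjugate g* = δ_{𝔹_{∞,2}} (indicator of {v : ‖v_J‖ ≤ 1 for all J}) satisfies the quadratic growth condition at v̄ for x̄: with κ = ½ min{‖x̄_J‖ : x̄_J ≠ 0} > 0 (taking κ arbitrary if all x̄_J = 0), for every v with ‖v_J‖ ≤ 1 for all J one has 0 ≥ ⟨x̄, v − v̄⟩ + κ Σ_{J : x̄_J ≠ 0} ‖v_J − v̄_J‖². -/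
open Filter Topology Metric Set
open scoped RealInnerProductSpace NNReal ENNReal

noncomputable section

variable {E F : Type*} [NormedAddCommGroup E] [InnerProductSpace ℝ E]
  [NormedAddCommGroup F] [InnerProductSpace ℝ F]

/-! On a block `J` with `x̄_J ≠ 0`, the subgradient inequality for `‖·‖_{1,2}` restricts to one for
the Euclidean norm of the block, which forces `v̄_J = x̄_J / ‖x̄_J‖`, a unit vector. For `‖v_J‖ ≤ 1`
the inequality `⟨v̄_J, v_J - v̄_J⟩ ≤ -½ ‖v_J - v̄_J‖²` then bounds that block's contribution by
`-‖x̄_J‖/2 · ‖v_J - v̄_J‖² ≤ -κ ‖v_J - v̄_J‖²`; blocks with `x̄_J = 0` contribute nothing. -/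

section NormSubgradient

variable {E : Type*} [NormedAddCommGroup E] [InnerProductSpace ℝ E]

theorem norm_le_one_and_inner_eq_norm_of_subgradient {x v : E}
    (h : ∀ y, ‖x‖ + ⟪v, y - x⟫ ≤ ‖y‖) : ‖v‖ ≤ 1 ∧ ⟪v, x⟫ = ‖x‖ := by
  have h0 := h 0
  have h2 := h ((2 : ℝ) • x)
  have hv := h (x + v)
  rw [zero_sub, inner_neg_right, norm_zero] at h0
  rw [norm_smul, two_smul, add_sub_cancel_right, Real.norm_two] at h2
  rw [add_sub_cancel_left, real_inner_self_eq_norm_sq] at hv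
  refine ⟨?_, by linarith⟩
  nlinarith [norm_add_le x v, norm_nonneg v]

theorem inner_sub_le_neg_half_norm_sub_sq {u v : E} (hu : ‖u‖ ≤ 1) (hv : ‖v‖ = 1) :
    ⟪v, u - v⟫ ≤ -(‖u - v‖ ^ 2 / 2) := by
  rw [norm_sub_sq_real, inner_sub_right, real_inner_self_eq_norm_sq, hv, real_inner_comm]
  nlinarith [norm_nonneg u]

theorem inner_sub_add_mul_norm_sub_sq_nonpos {x v u : E} {κ : ℝ}
    (h : ∀ y, ‖x‖ + ⟪v, y - x⟫ ≤ ‖y‖) (hx : x ≠ 0) (hu : ‖u‖ ≤ 1) (hκ : κ ≤ ‖x‖ / 2) :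
    ⟪x, u - v⟫ + κ * ‖u - v‖ ^ 2 ≤ 0 := by
  obtain ⟨hv1, hvx⟩ := norm_le_one_and_inner_eq_norm_of_subgradient h
  have hxpos : 0 < ‖x‖ := norm_pos_iff.mpr hx
  have hv : ‖v‖ = 1 := by
    refine le_antisymm hv1 (le_of_mul_le_mul_right ?_ hxpos)
    simpa [hvx] using real_inner_le_norm v x
  -- equality in Cauchy–Schwarz forces `x = ‖x‖ • v`
  have hxv : x = ‖x‖ • v := by
    have := inner_eq_norm_mul_iff_real.mp (show ⟪v, x⟫ = ‖v‖ * ‖x‖ by rw [hvx, hv, one_mul])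
    rwa [hv, one_smul, eq_comm] at this
  calc ⟪x, u - v⟫ + κ * ‖u - v‖ ^ 2
      ≤ ‖x‖ * ⟪v, u - v⟫ + ‖x‖ / 2 * ‖u - v‖ ^ 2 := by
        rw [hxv, real_inner_smul_left, norm_smul, norm_norm, hv, mul_one]
        gcongr
    _ ≤ 0 := by nlinarith [inner_sub_le_neg_half_norm_sub_sq hu hv]

end NormSubgradient

section Blocks

variable {α ι : Type*} (grp : α → ι)

def blockRestrict (J : ι) (x : α → ℝ) : EuclideanSpace ℝ {i // grp i = J} :=
  WithLp.toLp 2 fun i => x i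

def blockUpdate [DecidableEq ι] (x : α → ℝ) (J : ι) (y : EuclideanSpace ℝ {i // grp i = J}) :
    α → ℝ :=
  fun i => if h : grp i = J then y ⟨i, h⟩ else x i

variable {grp}

theorem blockRestrict_sub (J : ι) (x y : α → ℝ) :
    blockRestrict grp J (x - y) = blockRestrict grp J x - blockRestrict grp J y :=
  rfl

variable [DecidableEq ι]

theorem blockRestrict_blockUpdate_self (x : α → ℝ) (J : ι)
    (y : EuclideanSpace ℝ {i // grp i = J}) :
    blockRestrict grp J (blockUpdate grp x J y) = y := by
  ext ⟨i, hi⟩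
  simp [blockRestrict, blockUpdate, hi]

theorem blockRestrict_blockUpdate_of_ne (x : α → ℝ) {J J' : ι} (hJ : J' ≠ J)
    (y : EuclideanSpace ℝ {i // grp i = J}) :
    blockRestrict grp J' (blockUpdate grp x J y) = blockRestrict grp J' x := by
  ext ⟨i, hi⟩
  simp [blockRestrict, blockUpdate, hi, hJ]

variable [Fintype α]

theorem inner_blockRestrict (J : ι) (x y : α → ℝ) :
    ⟪blockRestrict grp J x, blockRestrict grp J y⟫ =
      ∑ i ∈ Finset.univ.filter (fun i => grp i = J), x i * y i := by
  rw [PiLp.inner_apply]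
  simp only [blockRestrict, PiLp.toLp_apply, Real.inner_apply]
  exact (Finset.sum_subtype (p := fun i => grp i = J) _ (fun i => Finset.mem_filter_univ i)
    (fun i => x i * y i)).symm

theorem norm_blockRestrict_sq (J : ι) (x : α → ℝ) :
    ‖blockRestrict grp J x‖ ^ 2 = ∑ i ∈ Finset.univ.filter (fun i => grp i = J), x i ^ 2 := by
  rw [← real_inner_self_eq_norm_sq, inner_blockRestrict]
  simp only [sq]

theorem norm_blockRestrict (J : ι) (x : α → ℝ) :
    ‖blockRestrict grp J x‖ = √(∑ i ∈ Finset.univ.filter (fun i => grp i = J), x i ^ 2) := by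
  rw [← norm_blockRestrict_sq, Real.sqrt_sq (norm_nonneg _)]

variable [Fintype ι]

theorem sum_mul_eq_sum_inner_blockRestrict (grp : α → ι) (x y : α → ℝ) :
    ∑ i, x i * y i = ∑ J, ⟪blockRestrict grp J x, blockRestrict grp J y⟫ := by
  simp only [inner_blockRestrict]
  exact (Finset.sum_fiberwise Finset.univ grp _).symm

theorem subgradient_norm_blockRestrict {x v : α → ℝ}
    (h : ∀ u, ∑ J, ‖blockRestrict grp J x‖ + ∑ i, v i * (u i - x i) ≤
      ∑ J, ‖blockRestrict grp J u‖)
    (J : ι) (y : EuclideanSpace ℝ {i // grp i = J}) :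
    ‖blockRestrict grp J x‖ + ⟪blockRestrict grp J v, y - blockRestrict grp J x⟫ ≤ ‖y‖ := by
  set u := blockUpdate grp x J y
  have hlin : ∑ i, v i * (u i - x i) = ⟪blockRestrict grp J v, y - blockRestrict grp J x⟫ := by
    rw [← blockRestrict_blockUpdate_self x J y]
    simp only [← Pi.sub_apply u x]
    rw [sum_mul_eq_sum_inner_blockRestrict grp, Finset.sum_eq_single J (fun J' _ hJ' => by
      rw [blockRestrict_sub, blockRestrict_blockUpdate_of_ne x hJ', sub_self, inner_zero_right])
      (by simp), blockRestrict_sub]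
  have hnorm : ∑ J', ‖blockRestrict grp J' u‖ - ∑ J', ‖blockRestrict grp J' x‖ =
      ‖y‖ - ‖blockRestrict grp J x‖ := by
    rw [← Finset.sum_sub_distrib, Finset.sum_eq_single J (fun J' _ hJ' => by
      rw [blockRestrict_blockUpdate_of_ne x hJ', sub_self]) (by simp),
      blockRestrict_blockUpdate_self]
  linarith [h u]

end Blocks

/-- quadratic growth of the conjugate of the group Lasso norm. -/
theorem stmt17 {n : ℕ} {ι : Type*} [Fintype ι] [DecidableEq ι] (grp : Fin n → ι)
    (xb vb : Fin n → ℝ)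
    (gnorm : (Fin n → ℝ) → ι → ℝ)
    (hgnorm : ∀ x J, gnorm x J =
      Real.sqrt (∑ i ∈ Finset.univ.filter (fun i => grp i = J), x i ^ 2))
    (g : (Fin n → ℝ) → ℝ) (hg : ∀ x, g x = ∑ J, gnorm x J)
    (hv : ∀ u : Fin n → ℝ, g xb + ∑ i, vb i * (u i - xb i) ≤ g u)
    (S : Finset ι) (hS : S = Finset.univ.filter (fun J => gnorm xb J ≠ 0))
    (κ : ℝ) (hκ : ∀ hne : S.Nonempty, κ = (S.inf' hne (fun J => gnorm xb J)) / 2) :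
    ∀ v : Fin n → ℝ, (∀ J, gnorm v J ≤ 1) →
      (∑ i, xb i * (v i - vb i)) +
        κ * ∑ J ∈ S, (∑ i ∈ Finset.univ.filter (fun i => grp i = J), (v i - vb i) ^ 2)
        ≤ 0 := by
  intro v hv1
  have hgnorm_block : ∀ x J, gnorm x J = ‖blockRestrict grp J x‖ := fun x J => by
    rw [hgnorm, norm_blockRestrict]
  have hsub := subgradient_norm_blockRestrict (x := xb) (v := vb) fun u => by
    simpa only [hg, hgnorm_block] using hv u
  have hmemS : ∀ J, J ∈ S ↔ blockRestrict grp J xb ≠ 0 := fun J => by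
    simp [hS, hgnorm_block]
  have hκle : ∀ J ∈ S, κ ≤ ‖blockRestrict grp J xb‖ / 2 := fun J hJ => by
    rw [hκ ⟨J, hJ⟩, ← hgnorm_block]
    gcongr
    exact Finset.inf'_le _ hJ
  have hzero : ∀ J ∉ S, blockRestrict grp J xb = 0 := fun J hJ => by
    simpa [hmemS] using hJ
  simp only [← Pi.sub_apply v vb, ← norm_blockRestrict_sq]
  rw [sum_mul_eq_sum_inner_blockRestrict grp, ← Finset.sum_subset S.subset_univ
    fun J _ hJ => by rw [hzero J hJ, inner_zero_left], Finset.mul_sum, ← Finset.sum_add_distrib]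
  refine Finset.sum_nonpos fun J hJ => ?_
  rw [blockRestrict_sub]
  exact inner_sub_add_mul_norm_sub_sq_nonpos (hsub J) ((hmemS J).mp hJ)
    (hgnorm_block v J ▸ hv1 J) (hκle J hJ)

end
end
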